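/- In a single iteration of RandColStep, a vertex u with current palette C_u of size at least d(u)+1 (where d(u) is its number of currently uncolored neighbors) gets permanently colored with probability at least 1/4. -/

import Mathlib

/-!
Fix the colour `c` picked by `u`. A neighbour `v ∈ N(u) ∩ U` avoids `c` with probability
`1 - x_v(c)`, where `x_v(c) = [c ∈ C_v] / |C_v| ≤ 1/2` because `u` is itself an uncoloured
neighbour of `v`, so `|C_v| ≥ 2`. On `[0, 1/2]` the chord of the convex function `t ↦ 4^{-t}`
gives `1 - x ≥ 4^{-x}`, so given `c` the success probability is at least `4^{-∑_v x_v(c)}`.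
Averaging over `c ∈ C_u` and applying Jensen bounds it below by `4^{-m}`, where
`m = |C_u|⁻¹ ∑_v ∑_c x_v(c) ≤ d(u) / |C_u| < 1` is the expected number of collisions.
-/

open Finset

lemma one_quarter_rpow_le_one_sub {x : ℝ} (h0 : 0 ≤ x) (h1 : x ≤ 1 / 2) :
    (1 / 4 : ℝ) ^ x ≤ 1 - x := by
  have hchord := (convexOn_rpow_left (by norm_num : (0 : ℝ) < 1 / 4)).2 (Set.mem_univ 0)
    (Set.mem_univ (1 / 2)) (by linarith : (0 : ℝ) ≤ 1 - 2 * x) (by linarith : (0 : ℝ) ≤ 2 * x)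
    (by ring)
  have hsqrt : (1 / 4 : ℝ) ^ (1 / 2 : ℝ) = 1 / 2 := by
    rw [← Real.sqrt_eq_rpow, show (1 / 4 : ℝ) = (1 / 2) ^ 2 by norm_num,
      Real.sqrt_sq (by norm_num)]
  simp only [smul_eq_mul, mul_zero, zero_add, Real.rpow_zero, hsqrt] at hchord
  rw [show 2 * x * (1 / 2) = x by ring] at hchord
  linarith

lemma ConvexOn.card_mul_map_sum_div_card_le {ι : Type*} {f : ℝ → ℝ}
    (hf : ConvexOn ℝ Set.univ f) {s : Finset ι} (hs : s.Nonempty) (a : ι → ℝ) :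
    #s * f ((∑ i ∈ s, a i) / #s) ≤ ∑ i ∈ s, f (a i) := by
  have hn : (0 : ℝ) < #s := by exact_mod_cast hs.card_pos
  have h := hf.map_sum_le (t := s) (w := fun _ => (#s : ℝ)⁻¹) (p := a)
    (fun _ _ => by positivity) (by simp [hn.ne']) (fun _ _ => Set.mem_univ _)
  simp only [smul_eq_mul, ← mul_sum] at h
  rw [div_eq_inv_mul]
  calc (#s : ℝ) * f ((#s : ℝ)⁻¹ * ∑ i ∈ s, a i) ≤ #s * ((#s : ℝ)⁻¹ * ∑ i ∈ s, f (a i)) :=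
        mul_le_mul_of_nonneg_left h hn.le
    _ = ∑ i ∈ s, f (a i) := by field_simp

lemma one_quarter_mul_card_le_sum_prod_one_sub {ι κ : Type*} (s : Finset ι) (t : Finset κ)
    (x : κ → ι → ℝ) (hx0 : ∀ v ∈ t, ∀ c ∈ s, 0 ≤ x v c)
    (hx1 : ∀ v ∈ t, ∀ c ∈ s, x v c ≤ 1 / 2) (hsum : ∑ c ∈ s, ∑ v ∈ t, x v c ≤ #s) :
    1 / 4 * (#s : ℝ) ≤ ∑ c ∈ s, ∏ v ∈ t, (1 - x v c) := by
  rcases s.eq_empty_or_nonempty with rfl | hs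
  · simp
  have hn : (0 : ℝ) < #s := by exact_mod_cast hs.card_pos
  have hmean : (∑ c ∈ s, ∑ v ∈ t, x v c) / #s ≤ 1 := (div_le_one hn).2 hsum
  calc 1 / 4 * (#s : ℝ) = #s * (1 / 4 : ℝ) ^ (1 : ℝ) := by rw [Real.rpow_one, mul_comm]
    _ ≤ #s * (1 / 4 : ℝ) ^ ((∑ c ∈ s, ∑ v ∈ t, x v c) / #s) :=
        mul_le_mul_of_nonneg_left
          (Real.rpow_le_rpow_of_exponent_ge (by norm_num) (by norm_num) hmean) hn.le
    _ ≤ ∑ c ∈ s, (1 / 4 : ℝ) ^ (∑ v ∈ t, x v c) :=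
        (convexOn_rpow_left (by norm_num)).card_mul_map_sum_div_card_le hs _
    _ = ∑ c ∈ s, ∏ v ∈ t, (1 / 4 : ℝ) ^ x v c := by
        simp_rw [Real.rpow_sum_of_pos (by norm_num : (0 : ℝ) < 1 / 4)]
    _ ≤ ∑ c ∈ s, ∏ v ∈ t, (1 - x v c) :=
        sum_le_sum fun c hc => prod_le_prod (fun _ _ => by positivity)
          fun v hv => one_quarter_rpow_le_one_sub (hx0 v hv c hc) (hx1 v hv c hc)

section Palettes

variable {V α : Type*} [DecidableEq V] [DecidableEq α]
  (C : V → Finset α) (N : Finset V)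

lemma card_filter_piFinset_forall_ne [Fintype V] {u : V} (hu : u ∉ N) :
    #{σ ∈ Fintype.piFinset C | ∀ v ∈ N, σ v ≠ σ u} =
      ∑ c ∈ C u, ∏ v ∈ univ.erase u, #(if v ∈ N then (C v).erase c else C v) := by
  rw [card_eq_sum_card_fiberwise (f := fun σ => σ u) (t := C u)
    fun σ hσ => Fintype.mem_piFinset.1 (mem_filter.1 hσ).1 u]
  refine sum_congr rfl fun c hc => ?_
  rw [← Fintype.card_filter_piFinset_eq_of_mem _ u (by simpa [hu] using hc)]
  congr 1
  ext σ
  simp only [mem_filter, Fintype.mem_piFinset]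
  constructor
  · rintro ⟨⟨hσ, hne⟩, rfl⟩
    refine ⟨fun v => ?_, rfl⟩
    split_ifs with hv
    · exact mem_erase.2 ⟨hne v hv, hσ v⟩
    · exact hσ v
  · rintro ⟨hσ, rfl⟩
    have hmem : ∀ v, σ v ∈ C v := fun v => by
      have := hσ v; split_ifs at this; exacts [mem_of_mem_erase this, this]
    refine ⟨⟨hmem, fun v hv => ?_⟩, rfl⟩
    exact ne_of_mem_erase (by simpa only [hv, if_true] using hσ v)

noncomputable def hitProb (v : V) (c : α) : ℝ :=
  if v ∈ N ∧ c ∈ C v then (#(C v) : ℝ)⁻¹ else 0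

lemma card_ite_erase_eq_mul_one_sub_hitProb (v : V) (c : α) :
    (#(if v ∈ N then (C v).erase c else C v) : ℝ) = #(C v) * (1 - hitProb C N v c) := by
  unfold hitProb
  by_cases hv : v ∈ N
  · by_cases hc : c ∈ C v
    · have hpos : 0 < #(C v) := card_pos.2 ⟨c, hc⟩
      rw [if_pos hv, if_pos ⟨hv, hc⟩, card_erase_of_mem hc, Nat.cast_sub hpos, Nat.cast_one]
      field_simp
    · simp [hv, hc]
  · simp [hv]

lemma hitProb_nonneg (v : V) (c : α) : 0 ≤ hitProb C N v c := by
  unfold hitProb; split_ifs <;> positivity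

lemma hitProb_le_half (hN : ∀ v ∈ N, 2 ≤ #(C v)) (v : V) (c : α) : hitProb C N v c ≤ 1 / 2 := by
  unfold hitProb
  split_ifs with h
  · rw [inv_eq_one_div]
    exact one_div_le_one_div_of_le (by norm_num) (by exact_mod_cast hN v h.1)
  · norm_num

lemma sum_hitProb_le (s : Finset α) (v : V) :
    ∑ c ∈ s, hitProb C N v c ≤ if v ∈ N then 1 else 0 := by
  unfold hitProb
  by_cases hv : v ∈ N
  · simp only [hv, true_and, if_true]
    rw [sum_ite_mem, sum_const, nsmul_eq_mul, ← div_eq_mul_inv]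
    exact div_le_one_of_le₀ (by exact_mod_cast card_le_card inter_subset_right) (by positivity)
  · simp [hv]

lemma sum_sum_hitProb_le (s : Finset α) (t : Finset V) :
    ∑ c ∈ s, ∑ v ∈ t, hitProb C N v c ≤ #N := by
  rw [sum_comm]
  calc ∑ v ∈ t, ∑ c ∈ s, hitProb C N v c ≤ ∑ v ∈ t, if v ∈ N then (1 : ℝ) else 0 :=
        sum_le_sum fun v _ => sum_hitProb_le C N s v
    _ = #(t ∩ N) := by rw [sum_ite_mem, sum_const, nsmul_one]
    _ ≤ #N := by exact_mod_cast card_le_card inter_subset_right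

end Palettes

open Classical in
theorem stmt12_general {V : Type} [Fintype V] [DecidableEq V] (G : SimpleGraph V)
    [DecidableRel G.Adj] (Δ : ℕ)
    (U : Finset V) (u : V) (hu : u ∈ U)
    (C : V → Finset (Fin (Δ + 1)))
    (hinv : ∀ w ∈ U, ((G.neighborFinset w) ∩ U).card + 1 ≤ (C w).card) :
    (1 / 4 : ℝ) * ((Fintype.piFinset C).card : ℝ) ≤
      (((Fintype.piFinset C).filter
          (fun σ : V → Fin (Δ + 1) =>
            ∀ v ∈ (G.neighborFinset u) ∩ U, σ v ≠ σ u)).card : ℝ) := by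
  set N := G.neighborFinset u ∩ U
  have huN : u ∉ N := fun h => G.irrefl ((G.mem_neighborFinset _ _).1 (mem_inter.1 h).1)
  have hN : ∀ v ∈ N, 2 ≤ #(C v) := by
    intro v hv
    obtain ⟨huv, hvU⟩ := mem_inter.1 hv
    have hvu : u ∈ G.neighborFinset v ∩ U :=
      mem_inter.2 ⟨(G.mem_neighborFinset _ _).2 ((G.mem_neighborFinset _ _).1 huv).symm, hu⟩
    linarith [card_pos.2 ⟨u, hvu⟩, hinv v hvU]
  have hquarter := one_quarter_mul_card_le_sum_prod_one_sub (C u) (univ.erase u) (hitProb C N)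
    (fun v _ c _ => hitProb_nonneg C N v c) (fun v _ c _ => hitProb_le_half C N hN v c)
    ((sum_sum_hitProb_le C N _ _).trans (by exact_mod_cast (Nat.le_succ _).trans (hinv u hu)))
  rw [card_filter_piFinset_forall_ne C N huN, Fintype.card_piFinset,
    ← mul_prod_erase univ _ (mem_univ u)]
  simp only [Nat.cast_mul, Nat.cast_sum, Nat.cast_prod, card_ite_erase_eq_mul_one_sub_hitProb,
    prod_mul_distrib, ← mul_sum]
  calc 1 / 4 * (#(C u) * ∏ v ∈ univ.erase u, (#(C v) : ℝ))
      = (∏ v ∈ univ.erase u, (#(C v) : ℝ)) * (1 / 4 * #(C u)) := by ring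
    _ ≤ _ := mul_le_mul_of_nonneg_left hquarter (prod_nonneg fun _ _ => Nat.cast_nonneg _)

open Classical in
/-- In a single iteration of RandColStep, if the uncolored vertices `U`
satisfy the palette invariant `|C_w| ≥ d(w) + 1` (where `d(w)` is the number of
uncolored neighbors of `w`), then a fixed uncolored vertex `u` gets permanently colored
— i.e., no uncolored neighbor tentatively picks `u`'s tentative color — with
probability at least `1/4` over the independent uniform picks `σ v ∈ C_v`. -/
theorem stmt12 {V : Type} [Fintype V] [DecidableEq V] (G : SimpleGraph V)
    [DecidableRel G.Adj] (Δ : ℕ) (hdeg : ∀ v : V, G.degree v ≤ Δ)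
    (U : Finset V) (u : V) (hu : u ∈ U)
    (C : V → Finset (Fin (Δ + 1))) (hCne : ∀ v : V, (C v).Nonempty)
    (hinv : ∀ w ∈ U, ((G.neighborFinset w) ∩ U).card + 1 ≤ (C w).card) :
    (1 / 4 : ℝ) * ((Fintype.piFinset C).card : ℝ) ≤
      (((Fintype.piFinset C).filter
          (fun σ : V → Fin (Δ + 1) =>
            ∀ v ∈ (G.neighborFinset u) ∩ U, σ v ≠ σ u)).card : ℝ) :=
  stmt12_general G Δ U u hu C hinv
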